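/- For all integers N ≥ 1, r ≥ 1 and n ≥ 1, M_r(n) = det(A), where A is the n×n matrix with entries A_{i,j} = (−1)^{i−j+1} · B^{(r)}_{N,i−j+1}/(i−j+1)! for 1 ≤ j ≤ i ≤ n, A_{i,i+1} = 1 for 1 ≤ i ≤ n−1, and A_{i,j} = 0 for j > i+1. -/

import Mathlib

/-- The power series ∑_{i≥0} (N!/(N+i)!) xⁱ over ℚ. -/
noncomputable def hgSeries (N : ℕ) : PowerSeries ℚ :=
  PowerSeries.mk fun i => (N.factorial : ℚ) / ((N + i).factorial : ℚ)

/-- The higher order hypergeometric Bernoulli number `B^{(r)}_{N,n}`, defined so that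
`∑ (B^{(r)}_{N,n}/n!) xⁿ` is the r-th power of the multiplicative inverse of
`hgSeries N` in ℚ[[x]]. -/
noncomputable def hBr (N r n : ℕ) : ℚ :=
  (n.factorial : ℚ) * PowerSeries.coeff (R := ℚ) n ((hgSeries N)⁻¹ ^ r)

/-- `M_r(e) = ∑_{i₁+⋯+i_r=e} (N!)^r / ((N+i₁)! ⋯ (N+i_r)!)`. -/
noncomputable def M (N r e : ℕ) : ℚ :=
  ∑ i ∈ Finset.Nat.antidiagonalTuple r e,
    (N.factorial : ℚ) ^ r / ∏ j, ((N + i j).factorial : ℚ)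

/-!
Write `D_n(a)` for the determinant of the lower Hessenberg Toeplitz matrix with `1` on the
superdiagonal and `a (i - j + 1)` on and below the diagonal. Expanding along the last row gives
`D_{n+1} = ∑_j (-1)^(n+j) a (n-j+1) D_j`, so for `a k = (-1)^k g_k` this becomes
`D_{n+1} = -∑_j g_{n-j+1} D_j`. That is the recursion which the coefficients of `f` obey when
`g * f = 1` and `g₀ = 1`, hence `D_n = f_n` (Wronski's formula). For `g = (hgSeries N)⁻¹ ^ r`
and `f = hgSeries N ^ r`, whose `n`-th coefficient is `M_r(n)`, this is the theorem.
-/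

open Finset Matrix PowerSeries

theorem PowerSeries.coeff_pow_eq_sum_antidiagonalTuple {R : Type*} [CommSemiring R]
    (f : R⟦X⟧) (r e : ℕ) :
    coeff e (f ^ r) = ∑ i ∈ Nat.antidiagonalTuple r e, ∏ j, coeff (i j) f := by
  rw [← Fin.prod_const, coeff_prod]
  refine Finset.sum_nbij' (fun l => ⇑l) Finsupp.equivFunOnFinite.symm ?_ ?_ ?_ ?_ ?_
  · intro l hl
    rw [mem_finsuppAntidiag] at hl
    simpa [Nat.mem_antidiagonalTuple] using hl.1
  · intro i hi
    rw [Nat.mem_antidiagonalTuple] at hi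
    simpa [mem_finsuppAntidiag] using hi
  · intro l _; simp
  · intro i _; rfl
  · intro l _; rfl

theorem Fin.val_succAbove_mk_castAdd {j m : ℕ} (hj : j < j + m + 1) (k : Fin j) :
    (Fin.succAbove ⟨j, hj⟩ (Fin.castAdd m k) : ℕ) = k := by
  rw [Fin.succAbove_of_castSucc_lt _ _ (by simp [Fin.lt_def])]
  rfl

theorem Fin.val_succAbove_mk_natAdd {j m : ℕ} (hj : j < j + m + 1) (k : Fin m) :
    (Fin.succAbove ⟨j, hj⟩ (Fin.natAdd j k) : ℕ) = j + k + 1 := by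
  rw [Fin.succAbove_of_le_castSucc _ _ (by simp [Fin.le_def])]
  rfl

section Wronski

variable {R : Type*} [CommRing R]

theorem PowerSeries.coeff_succ_eq_neg_sum_of_mul_eq_one {f g : R⟦X⟧} (hgf : g * f = 1)
    (hg : constantCoeff g = 1) (n : ℕ) :
    coeff (n + 1) f = -∑ j ∈ range (n + 1), coeff (n - j + 1) g * coeff j f := by
  have h := congrArg (coeff (n + 1)) hgf
  rw [mul_comm, coeff_mul,
    Nat.sum_antidiagonal_eq_sum_range_succ (fun j k => coeff j f * coeff k g), sum_range_succ,
    Nat.sub_self, coeff_zero_eq_constantCoeff_apply, hg, coeff_one,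
    if_neg n.succ_ne_zero] at h
  rw [eq_neg_iff_add_eq_zero, ← h, add_comm]
  congr 1
  · refine sum_congr rfl fun j hj => ?_
    rw [mul_comm, Nat.succ_sub (Nat.lt_succ_iff.mp (mem_range.mp hj))]
  · rw [mul_one]

def hessenbergEntry (a : ℕ → R) (i j : ℕ) : R :=
  if j = i + 1 then 1 else if j ≤ i then a (i - j + 1) else 0

def toeplitzHessenberg (a : ℕ → R) (n : ℕ) : Matrix (Fin n) (Fin n) R :=
  of fun i j => hessenbergEntry a i j

theorem hessenbergEntry_of_succ_lt (a : ℕ → R) {i j : ℕ} (h : i + 1 < j) :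
    hessenbergEntry a i j = 0 := by
  rw [hessenbergEntry, if_neg h.ne', if_neg (by omega)]

theorem hessenbergEntry_succ_self (a : ℕ → R) (i : ℕ) : hessenbergEntry a i (i + 1) = 1 :=
  if_pos rfl

theorem det_toeplitzHessenberg_submatrix_succAbove (a : ℕ → R) {n : ℕ} (j : Fin (n + 1)) :
    ((toeplitzHessenberg a (n + 1)).submatrix Fin.castSucc j.succAbove).det =
      (toeplitzHessenberg a j).det := by
  obtain ⟨j, hj⟩ := j
  obtain ⟨m, rfl⟩ : ∃ m, n = j + m := ⟨n - j, by omega⟩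
  have hblocks :
      ((toeplitzHessenberg a _).submatrix Fin.castSucc (Fin.succAbove ⟨j, hj⟩)).submatrix
        finSumFinEquiv finSumFinEquiv =
      fromBlocks (toeplitzHessenberg a j) 0
        (of fun (x : Fin m) (y : Fin j) => hessenbergEntry a (j + x) y)
        (of fun x y : Fin m => hessenbergEntry a (j + x) (j + y + 1)) := by
    ext (x | x) (y | y) <;>
      simp only [submatrix_apply, finSumFinEquiv_apply_left, finSumFinEquiv_apply_right,
        fromBlocks_apply₁₁, fromBlocks_apply₁₂, fromBlocks_apply₂₁, fromBlocks_apply₂₂,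
        toeplitzHessenberg, of_apply, Fin.val_castSucc, Fin.val_castAdd, Fin.val_natAdd,
        Fin.val_succAbove_mk_castAdd, Fin.val_succAbove_mk_natAdd, Matrix.zero_apply]
    exact hessenbergEntry_of_succ_lt a (by omega)
  have hunitriangular : (of fun x y : Fin m => hessenbergEntry a (j + x) (j + y + 1)).det = 1 := by
    rw [det_of_isLowerTriangular]
    · simp [hessenbergEntry_succ_self]
    · intro x y hxy
      exact hessenbergEntry_of_succ_lt a (by have h : (x : ℕ) < y := hxy; omega)
  rw [← det_submatrix_equiv_self finSumFinEquiv, hblocks, det_fromBlocks_zero₁₂, hunitriangular,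
    mul_one]

theorem det_toeplitzHessenberg_succ (a : ℕ → R) (n : ℕ) :
    (toeplitzHessenberg a (n + 1)).det =
      ∑ j ∈ range (n + 1), (-1) ^ (n + j) * a (n - j + 1) * (toeplitzHessenberg a j).det := by
  rw [det_succ_row _ (Fin.last n), ← Fin.sum_univ_eq_sum_range]
  refine sum_congr rfl fun j _ => ?_
  have hj : (j : ℕ) ≤ n := Nat.lt_succ_iff.mp j.isLt
  rw [Fin.succAbove_last, det_toeplitzHessenberg_submatrix_succAbove]
  simp only [toeplitzHessenberg, of_apply, Fin.val_last, hessenbergEntry,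
    if_neg (by omega : (j : ℕ) ≠ n + 1), if_pos hj]

theorem det_toeplitzHessenberg_eq_coeff {f g : R⟦X⟧} (hgf : g * f = 1)
    (hg : constantCoeff g = 1) (n : ℕ) :
    (toeplitzHessenberg (fun k => (-1) ^ k * coeff k g) n).det = coeff n f := by
  induction n using Nat.strong_induction_on with
  | _ n ih =>
    match n with
    | 0 =>
      have hf : constantCoeff f = 1 := by
        simpa [hg] using congrArg constantCoeff hgf
      rw [det_isEmpty, coeff_zero_eq_constantCoeff_apply, hf]
    | n + 1 =>
      rw [det_toeplitzHessenberg_succ, coeff_succ_eq_neg_sum_of_mul_eq_one hgf hg,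
        ← sum_neg_distrib]
      refine sum_congr rfl fun j hj => ?_
      have hj : j ≤ n := Nat.lt_succ_iff.mp (mem_range.mp hj)
      have hsign : (-1 : R) ^ (n + j) * (-1) ^ (n - j + 1) = -1 :=
        (pow_add _ _ _).symm.trans (Odd.neg_one_pow ⟨n, by omega⟩)
      rw [ih j (by omega)]
      linear_combination (coeff (n - j + 1) g * coeff j f) * hsign

end Wronski

theorem M_eq_coeff_hgSeries_pow (N r e : ℕ) : M N r e = coeff e (hgSeries N ^ r) := by
  simp only [M, coeff_pow_eq_sum_antidiagonalTuple, hgSeries, coeff_mk, prod_div_distrib,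
    prod_const, card_univ, Fintype.card_fin]

theorem constantCoeff_hgSeries (N : ℕ) : constantCoeff (hgSeries N) = 1 := by
  simp [hgSeries, Nat.factorial_ne_zero]

theorem hBr_div_factorial (N r k : ℕ) :
    hBr N r k / (k.factorial : ℚ) = coeff k ((hgSeries N)⁻¹ ^ r) := by
  rw [hBr, mul_div_cancel_left₀ _ (by positivity)]

theorem stmt15_general (N r n : ℕ) :
    M N r n =
      (Matrix.of fun i j : Fin n =>
        if (j : ℕ) = (i : ℕ) + 1 then (1 : ℚ)
        else if (j : ℕ) ≤ (i : ℕ) then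
          (-1 : ℚ) ^ ((i : ℕ) - (j : ℕ) + 1) * hBr N r ((i : ℕ) - (j : ℕ) + 1) /
            (((i : ℕ) - (j : ℕ) + 1).factorial : ℚ)
        else 0).det := by
  change _ = (toeplitzHessenberg (fun k => (-1) ^ k * hBr N r k / (k.factorial : ℚ)) n).det
  simp_rw [mul_div_assoc, hBr_div_factorial]
  have hinv : (hgSeries N)⁻¹ ^ r * hgSeries N ^ r = 1 := by
    rw [← mul_pow, PowerSeries.inv_mul_cancel _ (by simp [constantCoeff_hgSeries]), one_pow]
  have hconst : constantCoeff ((hgSeries N)⁻¹ ^ r) = 1 := by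
    simp [constantCoeff_hgSeries]
  rw [det_toeplitzHessenberg_eq_coeff hinv hconst, M_eq_coeff_hgSeries_pow]

/-- Inversion: determinant expression for `M_r(n)` in terms of `B^{(r)}_{N,k}`.
Rows and columns are 0-indexed: the (i,j) entry with j ≤ i is
`(-1)^(i-j+1) B^{(r)}_{N,i-j+1}/(i-j+1)!`, the superdiagonal entries are 1,
and all other entries are 0. -/
theorem stmt15 (N r n : ℕ) (hN : 1 ≤ N) (hr : 1 ≤ r) (hn : 1 ≤ n) :
    M N r n =
      (Matrix.of fun i j : Fin n =>
        if (j : ℕ) = (i : ℕ) + 1 then (1 : ℚ)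
        else if (j : ℕ) ≤ (i : ℕ) then
          (-1 : ℚ) ^ ((i : ℕ) - (j : ℕ) + 1) * hBr N r ((i : ℕ) - (j : ℕ) + 1) /
            (((i : ℕ) - (j : ℕ) + 1).factorial : ℚ)
        else 0).det :=
  stmt15_general N r n
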